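/- The function φ^T has a simple pole at z = iu with u = 2π/N: the limit of (z − 2πi/N)·φ^T(z) as z → 2πi/N (z ≠ 2πi/N) exists and equals r = 2i·sin(πB/(2N))·sin(π(2−B)/(2N))/sin(π/N). -/

import Mathlib

open Complex Topology Filter

/-- `φ^Z(z) = 1/(sinh(z/2)·sinh(½(z − 2πi/N)))`. -/
noncomputable def phiZ (N : ℕ) (z : ℂ) : ℂ :=
  1 / (Complex.sinh (z / 2) * Complex.sinh ((z - 2 * (Real.pi : ℂ) * I / N) / 2))

/-- `φ^T(z) = φ^Z(z)·sinh(½(z − iπB/N))·sinh(½(z − iπ(2−B)/N))`. -/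
noncomputable def phiT (N : ℕ) (B : ℝ) (z : ℂ) : ℂ :=
  phiZ N z * Complex.sinh ((z - I * (Real.pi : ℂ) * (B : ℂ) / N) / 2) *
    Complex.sinh ((z - I * (Real.pi : ℂ) * (2 - (B : ℂ)) / N) / 2)

/-! Near `c = 2πi/N` write `(z - c) φ^T(z)` as `(z - c)/sinh((z - c)/2)` times a function that is
continuous at `c`, since `sinh(c/2) = i sin(π/N) ≠ 0` for `N ≥ 2`. The first factor tends to `2`,
the reciprocal of the derivative of `sinh((z - c)/2)` at its zero, and evaluating the second one
at `c` with `sinh(iθ) = i sin θ` gives the residue. -/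

lemma tendsto_sub_div_sinh_half_sub (c : ℂ) :
    Tendsto (fun z => (z - c) / Complex.sinh ((z - c) / 2)) (𝓝[≠] c) (𝓝 2) := by
  have hderiv : HasDerivAt (fun z => Complex.sinh ((z - c) / 2)) (1 / 2) c := by
    simpa using (((hasDerivAt_id c).sub_const c).div_const 2).csinh
  have hslope := (hasDerivAt_iff_tendsto_slope.mp hderiv).inv₀ (by norm_num)
  norm_num at hslope
  refine hslope.congr fun z => ?_
  simp [slope_def_field, div_eq_mul_inv, mul_comm]

lemma sin_pi_div_natCast_ne_zero {N : ℕ} (hN : 2 ≤ N) : Complex.sin (Real.pi / N) ≠ 0 := by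
  have hN' : (1 : ℝ) < N := by exact_mod_cast hN
  have hpos : 0 < Real.sin (Real.pi / N) := Real.sin_pos_of_pos_of_lt_pi (by positivity)
    (div_lt_self Real.pi_pos hN')
  exact_mod_cast hpos.ne'

lemma sub_mul_phiT (N : ℕ) (B : ℝ) (z : ℂ) :
    (z - 2 * Real.pi * I / N) * phiT N B z =
      (z - 2 * Real.pi * I / N) / Complex.sinh ((z - 2 * Real.pi * I / N) / 2) *
        (Complex.sinh ((z - I * Real.pi * B / N) / 2) *
          Complex.sinh ((z - I * Real.pi * (2 - B) / N) / 2) / Complex.sinh (z / 2)) := by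
  simp only [phiT, phiZ, div_eq_mul_inv, one_mul, mul_inv]
  ring

theorem phiT_residue_at_iu_general (N : ℕ) (hN : 2 ≤ N) (B : ℝ) :
    Tendsto (fun z : ℂ => (z - 2 * (Real.pi : ℂ) * I / N) * phiT N B z)
      (𝓝[≠] (2 * (Real.pi : ℂ) * I / N))
      (𝓝 (2 * I * Complex.sin ((Real.pi : ℂ) * (B : ℂ) / (2 * N)) *
        Complex.sin ((Real.pi : ℂ) * (2 - (B : ℂ)) / (2 * N)) /
        Complex.sin ((Real.pi : ℂ) / N))) := by
  set c : ℂ := 2 * Real.pi * I / N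
  set rest : ℂ → ℂ := fun z => Complex.sinh ((z - I * Real.pi * B / N) / 2) *
    Complex.sinh ((z - I * Real.pi * (2 - B) / N) / 2) / Complex.sinh (z / 2)
  have hN0 : (N : ℂ) ≠ 0 := by exact_mod_cast (by omega : N ≠ 0)
  have hc : c / 2 = Real.pi / N * I := by simp only [c]; field_simp
  have hsinh_ne : Complex.sinh (c / 2) ≠ 0 := by
    simpa [hc, sinh_mul_I] using sin_pi_div_natCast_ne_zero hN
  have hrest : ContinuousAt rest c := by fun_prop (disch := exact hsinh_ne)
  have hval : 2 * rest c = 2 * I * Complex.sin (Real.pi * B / (2 * N)) *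
      Complex.sin (Real.pi * (2 - B) / (2 * N)) / Complex.sin (Real.pi / N) := by
    have hcB : (c - I * Real.pi * B / N) / 2 = Real.pi * (2 - B) / (2 * N) * I := by
      simp only [c]; field_simp
    have hcB' : (c - I * Real.pi * (2 - B) / N) / 2 = Real.pi * B / (2 * N) * I := by
      simp only [c]; field_simp; ring
    simp only [rest, hc, hcB, hcB', sinh_mul_I]
    field_simp
  rw [← hval]
  exact ((tendsto_sub_div_sinh_half_sub c).mul (hrest.tendsto.mono_left nhdsWithin_le_nhds)).congr
    fun z => (sub_mul_phiT N B z).symm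

/-- `φ^T` has a simple pole at `z = iu`, `u = 2π/N`, with residue
`r = 2i·sin(πB/(2N))·sin(π(2−B)/(2N))/sin(π/N)`. -/
theorem phiT_residue_at_iu (N : ℕ) (hN : 2 ≤ N) (B : ℝ) (hB0 : 0 < B) (hB2 : B < 2) :
    Tendsto (fun z : ℂ => (z - 2 * (Real.pi : ℂ) * I / N) * phiT N B z)
      (𝓝[≠] (2 * (Real.pi : ℂ) * I / N))
      (𝓝 (2 * I * Complex.sin ((Real.pi : ℂ) * (B : ℂ) / (2 * N)) *
        Complex.sin ((Real.pi : ℂ) * (2 - (B : ℂ)) / (2 * N)) /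
        Complex.sin ((Real.pi : ℂ) / N))) :=
  phiT_residue_at_iu_general N hN B
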